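/- The 5-dimensional nilpotent commutative associative algebra A₀₉ degenerates to A₁₅: the structure λ of A₁₅ lies in the closure of the GL(5,ℂ)-orbit O(μ) of the structure μ of A₀₉ (closure in the standard topology on the space of bilinear maps ℂ⁵ × ℂ⁵ → ℂ⁵). -/

import Mathlib

/-!
For `t ≠ 0` take the basis `f₁ = 2t e₁, f₂ = e₃, f₃ = 2t e₅, f₄ = e₁ + e₂, f₅ = 2 e₄` of `A₀₉`.
Its only nonzero products are `f₁f₂ = f₃`, `f₄² = f₅` and `f₁f₄ = t f₅` (note `f₂f₄ = e₅ - e₅ = 0`),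
so `λ + t • corr ∈ O(μ)`, where `corr` is the symmetric bilinear map whose only nonzero product
of basis vectors is `e₁e₄ = e₅`. Letting `t → 0` gives `λ ∈ closure O(μ)`.
-/

open ContinuousLinearMap

/-- The underlying space `ℂⁿ`. -/
abbrev Vn (n : ℕ) := Fin n → ℂ

/-- The space of bilinear maps `ℂⁿ × ℂⁿ → ℂⁿ` (as continuous linear maps in two
arguments), carrying its standard topology as a finite-dimensional complex vector space. -/
abbrev Bil (n : ℕ) := Vn n →L[ℂ] Vn n →L[ℂ] Vn n

/-- The action of `GL(n, ℂ)` on bilinear maps: `(g · μ)(x, y) = g (μ (g⁻¹ x) (g⁻¹ y))`. -/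
noncomputable def act {n : ℕ} (g : Vn n ≃L[ℂ] Vn n) (μ : Bil n) : Bil n :=
  ((compL ℂ (Vn n) (Vn n) (Vn n)).flip (g.symm : Vn n →L[ℂ] Vn n)).comp
    (((compL ℂ (Vn n) (Vn n) (Vn n)) (g : Vn n →L[ℂ] Vn n)).comp
      (μ.comp (g.symm : Vn n →L[ℂ] Vn n)))

@[simp] lemma act_apply {n : ℕ} (g : Vn n ≃L[ℂ] Vn n) (μ : Bil n) (x y : Vn n) :
    act g μ x y = g (μ (g.symm x) (g.symm y)) := rfl

/-- The orbit `O(μ)` of a bilinear map under the `GL(n, ℂ)`-action. -/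
noncomputable def orbit {n : ℕ} (μ : Bil n) : Set (Bil n) :=
  {ν | ∃ g : Vn n ≃L[ℂ] Vn n, ν = act g μ}

/-- The standard basis `e₁, …, e₅` of `ℂ⁵` (zero-indexed: `e i` is `e_{i+1}`). -/
def e (i : Fin 5) : Vn 5 := Pi.single i 1

/-- Multiplication table of the algebra `𝐀09` (entry `(i, j)` is `eᵢ · eⱼ`). -/
def tblA09 : Fin 5 → Fin 5 → Vn 5 :=
  ![![0, e 3, e 4, 0, 0],
   ![e 3, 0, -e 4, 0, 0],
   ![e 4, -e 4, 0, 0, 0],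
   ![0, 0, 0, 0, 0],
   ![0, 0, 0, 0, 0]]

/-- Multiplication table of the algebra `𝐀15` (entry `(i, j)` is `eᵢ · eⱼ`). -/
def tblA15 : Fin 5 → Fin 5 → Vn 5 :=
  ![![0, e 2, 0, 0, 0],
   ![e 2, 0, 0, 0, 0],
   ![0, 0, 0, 0, 0],
   ![0, 0, 0, e 4, 0],
   ![0, 0, 0, 0, 0]]

open Filter Topology Submodule

lemma mem_closure_of_forall_add_smul_mem {𝕜 E : Type*} [NontriviallyNormedField 𝕜]
    [AddCommGroup E] [TopologicalSpace E] [IsTopologicalAddGroup E] [Module 𝕜 E]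
    [ContinuousSMul 𝕜 E] {s : Set E} {x v : E} (h : ∀ t : 𝕜, t ≠ 0 → x + t • v ∈ s) : x ∈ closure s := by
  have hlim : Tendsto (fun t : 𝕜 => x + t • v) (𝓝[≠] 0) (𝓝 x) := by
    have hc : Continuous fun t : 𝕜 => x + t • v := by fun_prop
    simpa using (hc.tendsto 0).mono_left nhdsWithin_le_nhds
  exact mem_closure_of_tendsto hlim (eventually_nhdsWithin_of_forall h)

lemma bil_ext_single {n : ℕ} {ν₁ ν₂ : Bil n}
    (h : ∀ i j, ν₁ (Pi.single i 1) (Pi.single j 1) = ν₂ (Pi.single i 1) (Pi.single j 1)) :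
    ν₁ = ν₂ :=
  coe_injective <| (Pi.basisFun ℂ (Fin n)).ext fun i =>
    coe_injective <| (Pi.basisFun ℂ (Fin n)).ext fun j => by simpa using h i j

lemma mem_orbit_of_structure_constants {n : ℕ} {μ ν : Bil n} (f : Fin n → Vn n)
    (hf : ⊤ ≤ span ℂ (Set.range f))
    (h : ∀ i j, μ (f i) (f j) = ∑ k, ν (Pi.single i 1) (Pi.single j 1) k • f k) :
    ν ∈ orbit μ := by
  let b := basisOfTopLeSpanOfCardEqFinrank f hf (by simp)
  let g : Vn n ≃L[ℂ] Vn n := b.equivFun.symm.toContinuousLinearEquiv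
  have hg : ∀ x, g x = ∑ k, x k • f k := fun x => by simp [g, b]
  have hg_single : ∀ i, g (Pi.single i 1) = f i := fun i => by simp [hg]
  refine ⟨g.symm, bil_ext_single fun i j => ?_⟩
  rw [act_apply, ContinuousLinearEquiv.symm_symm, hg_single, hg_single, h, ← hg,
    ContinuousLinearEquiv.symm_apply_apply]

noncomputable def corr : Bil 5 :=
  (proj 0 : Vn 5 →L[ℂ] ℂ).smulRight ((proj 3 : Vn 5 →L[ℂ] ℂ).smulRight (e 4)) +
  (proj 3 : Vn 5 →L[ℂ] ℂ).smulRight ((proj 0 : Vn 5 →L[ℂ] ℂ).smulRight (e 4))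

lemma corr_apply (x y : Vn 5) : corr x y = (x 0 * y 3 + x 3 * y 0) • e 4 := by
  simp [corr, add_smul, smul_smul, mul_comm]

noncomputable def degenBasis (t : ℂ) : Fin 5 → Vn 5 :=
  ![(2 * t) • e 0, e 2, (2 * t) • e 4, e 0 + e 1, (2 : ℂ) • e 3]

lemma e_apply (i j : Fin 5) : e i j = if j = i then 1 else 0 := Pi.single_apply i 1 j

lemma span_degenBasis {t : ℂ} (ht : t ≠ 0) : ⊤ ≤ span ℂ (Set.range (degenBasis t)) := by
  set S := span ℂ (Set.range (degenBasis t))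
  have mem : ∀ k, degenBasis t k ∈ S := fun k => subset_span ⟨k, rfl⟩
  have h2t : 2 * t ≠ 0 := mul_ne_zero two_ne_zero ht
  have he0 : e 0 ∈ S := inv_smul_smul₀ h2t (e 0) ▸ smul_mem _ _ (mem 0)
  have he1 : e 1 ∈ S := by simpa [degenBasis] using sub_mem (mem 3) he0
  have he3 : e 3 ∈ S := inv_smul_smul₀ (two_ne_zero' ℂ) (e 3) ▸ smul_mem _ _ (mem 4)
  have he4 : e 4 ∈ S := inv_smul_smul₀ h2t (e 4) ▸ smul_mem _ _ (mem 2)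
  rw [← (Pi.basisFun ℂ (Fin 5)).span_eq, span_le]
  rintro _ ⟨i, rfl⟩
  rw [Pi.basisFun_apply]
  fin_cases i
  exacts [he0, he1, mem 1, he3, he4]

lemma structure_constants_degenBasis {μ lam : Bil 5}
    (hμ : ∀ i j : Fin 5, μ (e i) (e j) = tblA09 i j)
    (hlam : ∀ i j : Fin 5, lam (e i) (e j) = tblA15 i j) (t : ℂ) (i j : Fin 5) :
    μ (degenBasis t i) (degenBasis t j) =
      ∑ k, (lam + t • corr) (Pi.single i 1) (Pi.single j 1) k • degenBasis t k := by
  change _ = ∑ k, (lam + t • corr) (e i) (e j) k • degenBasis t k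
  rw [add_apply, smul_apply, add_apply, smul_apply, hlam, corr_apply]
  simp only [Fin.sum_univ_five]
  fin_cases i <;> fin_cases j <;>
    simp [degenBasis, hμ, tblA09, tblA15, e_apply, smul_smul, mul_comm, two_smul, mul_two,
      add_smul]

/-- The $5$-dimensional nilpotent commutative associative algebra `𝐀09` degenerates to
`𝐀15`: the structure `λ` of `𝐀15` lies in the closure of
the `GL(5, ℂ)`-orbit `O(μ)` of the structure `μ` of `𝐀09`. -/
theorem A09_deg_A15 (μ lam : Bil 5)
    (hμ : ∀ i j : Fin 5, μ (e i) (e j) = tblA09 i j)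
    (hlam : ∀ i j : Fin 5, lam (e i) (e j) = tblA15 i j) :
    lam ∈ closure (orbit μ) := by
  refine mem_closure_of_forall_add_smul_mem (𝕜 := ℂ) (v := corr) fun t ht => ?_
  exact mem_orbit_of_structure_constants (degenBasis t) (span_degenBasis ht)
    (structure_constants_degenBasis hμ hlam t)
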